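/- (Nieto–Rodríguez-López) Let (X, d, ≤) be an ordered metric space and f a self-map on X such that: (a) (X, d) is complete; (b) f is monotone (either increasing or decreasing); (c) either f is continuous or (X, d, ≤) satisfies: for every sequence (x_n) converging to x whose consecutive terms are comparable, there exists a subsequence (x_{n_k}) every term of which is comparable to the limit x; (d) there exists x₀ ∈ X with x₀ ≺≻ f(x₀); (e) there exists α ∈ [0,1) such that d(f(x), f(y)) ≤ α·d(x, y) for all x, y ∈ X with x ≤ y; (f) every pair of elements of X has a lower bound or an upper bound. Then f has a unique fixed point. -/

import Mathlib

open Filter Topology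

section

variable {X : Type*} [MetricSpace X] [PartialOrder X]

/-- Two elements of an ordered set are comparable. -/
def Cmp (x y : X) : Prop := x ≤ y ∨ y ≤ x

/-- `f` is `g`-comparable: `g x ≺≻ g y` implies `f x ≺≻ f y`. -/
def GComparable (f g : X → X) : Prop :=
  ∀ x y : X, Cmp (g x) (g y) → Cmp (f x) (f y)

/-- The `g`-TCC property of an ordered metric space. -/
def GTCC (g : X → X) : Prop :=
  ∀ (x : ℕ → X) (l : X), (∀ n, Cmp (x n) (x (n + 1))) →
    Tendsto x atTop (𝓝 l) →
      ∃ φ : ℕ → ℕ, StrictMono φ ∧ ∀ k, Cmp (g (x (φ k))) (g l)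

/-- The TCC property of a subset of an ordered metric space. -/
def TCCOn (Y : Set X) : Prop :=
  ∀ (x : ℕ → X), (∀ n, x n ∈ Y) → ∀ l ∈ Y, (∀ n, Cmp (x n) (x (n + 1))) →
    Tendsto x atTop (𝓝 l) →
      ∃ φ : ℕ → ℕ, StrictMono φ ∧ ∀ k, Cmp (x (φ k)) l

/-- The TCC property of an ordered metric space. -/
def TCC (X : Type*) [MetricSpace X] [PartialOrder X] : Prop :=
  ∀ (x : ℕ → X) (l : X), (∀ n, Cmp (x n) (x (n + 1))) →
    Tendsto x atTop (𝓝 l) →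
      ∃ φ : ℕ → ℕ, StrictMono φ ∧ ∀ k, Cmp (x (φ k)) l

/-- The pair `(f, g)` is compatible. -/
def Compatible (f g : X → X) : Prop :=
  ∀ (x : ℕ → X) (l : X), Tendsto (fun n => g (x n)) atTop (𝓝 l) →
    Tendsto (fun n => f (x n)) atTop (𝓝 l) →
      Tendsto (fun n => dist (g (f (x n))) (f (g (x n)))) atTop (𝓝 0)

/-- `f` is `g`-continuous. -/
def GContinuous (f g : X → X) : Prop :=
  ∀ (x : ℕ → X) (a : X), Tendsto (fun n => g (x n)) atTop (𝓝 (g a)) →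
    Tendsto (fun n => f (x n)) atTop (𝓝 (f a))

/-- There exists a `≺≻`-chain between `a` and `b` inside `E`. -/
def ChainIn (E : Set X) (a b : X) : Prop :=
  ∃ (k : ℕ) (e : ℕ → X), 2 ≤ k ∧ (∀ i < k, e i ∈ E) ∧ e 0 = a ∧ e (k - 1) = b ∧
    ∀ i, i + 1 < k → Cmp (e i) (e (i + 1))

end

/-!
Starting from `x₀ ≺≻ f x₀`, monotonicity keeps consecutive Picard iterates comparable, so the
contraction estimate applies along the orbit, which is therefore Cauchy with a limit `l`.
Continuity of `f`, or the TCC property applied to the orbit, makes `l` a fixed point. For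
uniqueness, a common lower or upper bound `z` of two fixed points is comparable to both, so
its orbit converges geometrically to each of them.
-/

open Function

section

variable {X : Type*} [PartialOrder X] {f : X → X}

theorem Cmp.map_of_monotone_or_antitone (hf : Monotone f ∨ Antitone f) {x y : X}
    (h : Cmp x y) : Cmp (f x) (f y) := by
  rcases hf with hf | hf <;> rcases h with h | h
  exacts [Or.inl (hf h), Or.inr (hf h), Or.inr (hf h), Or.inl (hf h)]

theorem exists_cmp_cmp_of_lower_or_upper_bound
    (hf : ∀ x y : X, (∃ z : X, z ≤ x ∧ z ≤ y) ∨ (∃ z : X, x ≤ z ∧ y ≤ z)) (x y : X) :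
    ∃ z, Cmp z x ∧ Cmp z y := by
  obtain ⟨z, hzx, hzy⟩ | ⟨z, hxz, hyz⟩ := hf x y
  exacts [⟨z, Or.inl hzx, Or.inl hzy⟩, ⟨z, Or.inr hxz, Or.inr hyz⟩]

theorem Cmp.iterate (hmap : ∀ x y : X, Cmp x y → Cmp (f x) (f y)) {x y : X} (h : Cmp x y)
    (n : ℕ) : Cmp (f^[n] x) (f^[n] y) := by
  induction n with
  | zero => exact h
  | succ n ih => simpa only [iterate_succ_apply'] using hmap _ _ ih

variable [MetricSpace X]

theorem dist_le_of_cmp_of_forall_le {α : ℝ}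
    (hle : ∀ x y : X, x ≤ y → dist (f x) (f y) ≤ α * dist x y) {x y : X} (h : Cmp x y) :
    dist (f x) (f y) ≤ α * dist x y := by
  rcases h with h | h
  · exact hle x y h
  · simpa only [dist_comm] using hle y x h

section ComparableContraction

variable {α : ℝ} (hmap : ∀ x y : X, Cmp x y → Cmp (f x) (f y))
  (hcontr : ∀ x y : X, Cmp x y → dist (f x) (f y) ≤ α * dist x y)
include hmap hcontr

theorem dist_iterate_le_of_cmp (hα : 0 ≤ α) {x y : X} (h : Cmp x y) (n : ℕ) :
    dist (f^[n] x) (f^[n] y) ≤ α ^ n * dist x y := by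
  induction n with
  | zero => simp
  | succ n ih =>
    calc dist (f^[n + 1] x) (f^[n + 1] y) = dist (f (f^[n] x)) (f (f^[n] y)) := by
          simp only [iterate_succ_apply']
      _ ≤ α * dist (f^[n] x) (f^[n] y) := hcontr _ _ (h.iterate hmap n)
      _ ≤ α * (α ^ n * dist x y) := mul_le_mul_of_nonneg_left ih hα
      _ = α ^ (n + 1) * dist x y := by ring

theorem cauchySeq_iterate_of_cmp_self (hα0 : 0 ≤ α) (hα1 : α < 1) {x : X} (h : Cmp x (f x)) :
    CauchySeq fun n => f^[n] x := by
  refine cauchySeq_of_le_geometric α (dist x (f x)) hα1 fun n => ?_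
  rw [mul_comm, iterate_succ_apply]
  exact dist_iterate_le_of_cmp hmap hcontr hα0 h n

theorem tendsto_iterate_of_cmp_isFixedPt (hα0 : 0 ≤ α) (hα1 : α < 1) {z a : X}
    (ha : IsFixedPt f a) (h : Cmp z a) : Tendsto (fun n => f^[n] z) atTop (𝓝 a) := by
  rw [tendsto_iff_dist_tendsto_zero]
  have hgeom : Tendsto (fun n => α ^ n * dist z a) atTop (𝓝 0) := by
    simpa using (tendsto_pow_atTop_nhds_zero_of_lt_one hα0 hα1).mul_const (dist z a)
  refine squeeze_zero (fun _ => dist_nonneg) (fun n => ?_) hgeom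
  simpa only [iterate_fixed ha] using dist_iterate_le_of_cmp hmap hcontr hα0 h n

theorem IsFixedPt.eq_of_cmp_cmp (hα0 : 0 ≤ α) (hα1 : α < 1) {z a b : X}
    (ha : IsFixedPt f a) (hb : IsFixedPt f b) (hza : Cmp z a) (hzb : Cmp z b) : a = b :=
  tendsto_nhds_unique (tendsto_iterate_of_cmp_isFixedPt hmap hcontr hα0 hα1 ha hza)
    (tendsto_iterate_of_cmp_isFixedPt hmap hcontr hα0 hα1 hb hzb)

omit hmap in
/-- Along a subsequence comparable to `l`, the contraction estimate sends `f^[n + 1] x` to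
`f l`, so the limit `l` of the orbit is fixed. -/
theorem isFixedPt_of_tendsto_iterate_of_tcc (htcc : TCC X) {x l : X}
    (hcmp : ∀ n, Cmp (f^[n] x) (f^[n + 1] x)) (hl : Tendsto (fun n => f^[n] x) atTop (𝓝 l)) :
    IsFixedPt f l := by
  obtain ⟨φ, hφ, hφl⟩ := htcc _ l hcmp hl
  have hsub := hl.comp hφ.tendsto_atTop
  have hsucc : Tendsto (fun k => f^[φ k + 1] x) atTop (𝓝 l) :=
    hl.comp ((tendsto_add_atTop_nat 1).comp hφ.tendsto_atTop)
  have hto_fl : Tendsto (fun k => f^[φ k + 1] x) atTop (𝓝 (f l)) := by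
    rw [tendsto_iff_dist_tendsto_zero]
    have hbound : Tendsto (fun k => α * dist (f^[φ k] x) l) atTop (𝓝 0) := by
      simpa using (tendsto_iff_dist_tendsto_zero.mp hsub).const_mul α
    refine squeeze_zero (fun _ => dist_nonneg) (fun k => ?_) hbound
    rw [iterate_succ_apply']
    exact hcontr _ _ (hφl k)
  exact tendsto_nhds_unique hto_fl hsucc

end ComparableContraction

end

/-- Theorem 1.2 (Nieto–Rodríguez-López). -/
theorem stmt15 {X : Type*} [MetricSpace X] [PartialOrder X] [CompleteSpace X]
    (f : X → X)
    (hb : Monotone f ∨ Antitone f)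
    (hc : Continuous f ∨ TCC X)
    (hd : ∃ x₀ : X, Cmp x₀ (f x₀))
    (he : ∃ α : ℝ, 0 ≤ α ∧ α < 1 ∧
      ∀ x y : X, x ≤ y → dist (f x) (f y) ≤ α * dist x y)
    (hf : ∀ x y : X, (∃ z : X, z ≤ x ∧ z ≤ y) ∨ (∃ z : X, x ≤ z ∧ y ≤ z)) :
    ∃! x : X, f x = x := by
  obtain ⟨x₀, hx₀⟩ := hd
  obtain ⟨α, hα0, hα1, hle⟩ := he
  have hmap : ∀ x y : X, Cmp x y → Cmp (f x) (f y) := fun _ _ h =>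
    h.map_of_monotone_or_antitone hb
  have hcontr : ∀ x y : X, Cmp x y → dist (f x) (f y) ≤ α * dist x y := fun _ _ h =>
    dist_le_of_cmp_of_forall_le hle h
  obtain ⟨l, hl⟩ := cauchySeq_tendsto_of_complete
    (cauchySeq_iterate_of_cmp_self hmap hcontr hα0 hα1 hx₀)
  have hfix : IsFixedPt f l := by
    rcases hc with hcont | htcc
    · exact isFixedPt_of_tendsto_iterate hl hcont.continuousAt
    · refine isFixedPt_of_tendsto_iterate_of_tcc hcontr htcc (fun n => ?_) hl
      simpa only [iterate_succ_apply] using hx₀.iterate hmap n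
  refine ⟨l, hfix, fun y hy => ?_⟩
  obtain ⟨z, hzy, hzl⟩ := exists_cmp_cmp_of_lower_or_upper_bound hf y l
  exact IsFixedPt.eq_of_cmp_cmp hmap hcontr hα0 hα1 hy hfix hzy hzl
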